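/- arXiv:2206.01079 — 3 statements merged into one kernel-verified Lean document; each statement's English description precedes it below -/
import Mathlib

section
/- For any two policies π and π' in a finite-horizon MDP with horizon H, the average state occupancy distributions satisfy ‖d_π − d_{π'}‖_1 ≤ 2H · E_{s∼d_π}[TV(π(·|s), π'(·|s))], where TV denotes total variation distance between the action distributions. -/
open scoped Classical
open Finset

noncomputable section

/-- A finite-horizon MDP with finite state space `S`, finite action space `A`,
transition kernel `P`, reward function `R` (the reward received on the
transition `(s, a, s')`, valued in `[0,1]`), and initial state distribution `init`. -/
structure MDP (S A : Type) [Fintype S] [Fintype A] where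
  P : S → A → S → ℝ
  R : S → A → S → ℝ
  init : S → ℝ
  P_nonneg : ∀ s a s', 0 ≤ P s a s'
  P_sum_one : ∀ s a, ∑ s', P s a s' = 1
  R_nonneg : ∀ s a s', 0 ≤ R s a s'
  R_le_one : ∀ s a s', R s a s' ≤ 1
  init_nonneg : ∀ s, 0 ≤ init s
  init_sum_one : ∑ s, init s = 1

/-- A trajectory of horizon `H`: the states `s_0, …, s_H` and actions `a_0, …, a_{H-1}`. -/
abbrev Traj (S A : Type) (H : ℕ) := (Fin (H + 1) → S) × (Fin H → A)

variable {S A : Type} [Fintype S] [Fintype A]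

/-- Real-valued indicator of a proposition. -/
def ind (p : Prop) : ℝ := if p then 1 else 0

/-- A (Markovian, stochastic) policy: a probability distribution over actions at every state. -/
def IsPolicy (π : S → A → ℝ) : Prop :=
  (∀ s a, 0 ≤ π s a) ∧ (∀ s, ∑ a, π s a = 1)

/-- A return-conditioned policy: a distribution over actions for every state and target return. -/
def IsCondPolicy (π : S → ℝ → A → ℝ) : Prop :=
  (∀ s g a, 0 ≤ π s g a) ∧ (∀ s g, ∑ a, π s g a = 1)

/-- Probability of a trajectory under policy `π` in MDP `M`. -/
def trajProb (M : MDP S A) (π : S → A → ℝ) (H : ℕ) (τ : Traj S A H) : ℝ :=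
  M.init (τ.1 0) *
    ∏ t : Fin H, (π (τ.1 t.castSucc) (τ.2 t) * M.P (τ.1 t.castSucc) (τ.2 t) (τ.1 t.succ))

/-- Cumulative return `g(τ)` of a trajectory. -/
def ret (M : MDP S A) (H : ℕ) (τ : Traj S A H) : ℝ :=
  ∑ t : Fin H, M.R (τ.1 t.castSucc) (τ.2 t) (τ.1 t.succ)

/-- `J(π)`: expected return of policy `π`. -/
def J (M : MDP S A) (π : S → A → ℝ) (H : ℕ) : ℝ :=
  ∑ τ : Traj S A H, trajProb M π H τ * ret M H τ

/-- Unnormalized joint occupancy (over the `H` decision steps) of (state, action, return):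
`∑_t P_β(s_t = s, a_t = a, g(τ) = g)`. -/
def occSA (M : MDP S A) (β : S → A → ℝ) (H : ℕ) (s : S) (a : A) (g : ℝ) : ℝ :=
  ∑ t : Fin H, ∑ τ : Traj S A H,
    trajProb M β H τ * ind (τ.1 t.castSucc = s ∧ τ.2 t = a ∧ ret M H τ = g)

/-- Unnormalized joint occupancy of (state, return). -/
def occS (M : MDP S A) (β : S → A → ℝ) (H : ℕ) (s : S) (g : ℝ) : ℝ :=
  ∑ t : Fin H, ∑ τ : Traj S A H,
    trajProb M β H τ * ind (τ.1 t.castSucc = s ∧ ret M H τ = g)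

/-- Unnormalized state occupancy `∑_t P_β(s_t = s)`. -/
def visitMass (M : MDP S A) (β : S → A → ℝ) (H : ℕ) (s : S) : ℝ :=
  ∑ t : Fin H, ∑ τ : Traj S A H, trajProb M β H τ * ind (τ.1 t.castSucc = s)

/-- The return-conditioned action distribution `P_β(a | s, g)`. -/
def rcslCond (M : MDP S A) (β : S → A → ℝ) (H : ℕ) (s : S) (g : ℝ) : A → ℝ :=
  fun a => occSA M β H s a g / occS M β H s g

/-- The infinite-data RCSL policy `π_f^RCSL(a|s) = P_β(a | s, g = f(s))`. -/
def rcslPolicy (M : MDP S A) (β : S → A → ℝ) (H : ℕ) (f : S → ℝ) : S → A → ℝ :=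
  fun s => rcslCond M β H s (f s)

/-- `ε`-near-determinism with respect to deterministic dynamics `T` and rewards `r0`:
`P(r ≠ r0(s,a) or s' ≠ T(s,a) | s, a) ≤ ε` at every `(s,a)`. -/
def NearDet (M : MDP S A) (T : S → A → S) (r0 : S → A → ℝ) (ε : ℝ) : Prop :=
  ∀ s a, ∑ s', M.P s a s' * ind (¬(s' = T s a ∧ M.R s a s' = r0 s a)) ≤ ε

/-- `d_π^t(s) = P_π(s_t = s)`, the distribution of the state at step `t`. -/
def stepDist (M : MDP S A) (π : S → A → ℝ) (H : ℕ) (t : Fin (H + 1)) (s : S) : ℝ :=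
  ∑ τ : Traj S A H, trajProb M π H τ * ind (τ.1 t = s)

/-- `d_π(s)`: average state occupancy over the `H` decision steps. -/
def avgOcc (M : MDP S A) (π : S → A → ℝ) (H : ℕ) (s : S) : ℝ :=
  (1 / (H : ℝ)) * ∑ t : Fin H, stepDist M π H t.castSucc s

/-- Total variation distance between two finitely supported action distributions. -/
def tv (p q : A → ℝ) : ℝ := (1 / 2) * ∑ a, |p a - q a|

/-- Kullback–Leibler divergence between two finitely supported action distributions. -/
def klDiv (p q : A → ℝ) : ℝ := ∑ a, p a * Real.log (p a / q a)

/-- The expected loss `L(π̂) = E_{s ∼ P_β} E_{g ∼ P_β(·|s)} [KL(P_β(·|s,g) ‖ π̂(·|s,g))]`. -/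
def expLoss (M : MDP S A) (β : S → A → ℝ) (H : ℕ) (pihat : S → ℝ → A → ℝ) : ℝ :=
  (1 / (H : ℝ)) * ∑ t : Fin H, ∑ τ : Traj S A H, trajProb M β H τ *
    klDiv (rcslCond M β H (τ.1 t.castSucc) (ret M H τ)) (pihat (τ.1 t.castSucc) (ret M H τ))

/-- Joint occupancy of (state, action) restricted to trajectories with return `≥ grho`. -/
def occSAge (M : MDP S A) (β : S → A → ℝ) (H : ℕ) (s : S) (a : A) (grho : ℝ) : ℝ :=
  ∑ t : Fin H, ∑ τ : Traj S A H,
    trajProb M β H τ * ind (τ.1 t.castSucc = s ∧ τ.2 t = a ∧ grho ≤ ret M H τ)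

/-- State occupancy restricted to trajectories with return `≥ grho`. -/
def occSge (M : MDP S A) (β : S → A → ℝ) (H : ℕ) (s : S) (grho : ℝ) : ℝ :=
  ∑ t : Fin H, ∑ τ : Traj S A H,
    trajProb M β H τ * ind (τ.1 t.castSucc = s ∧ grho ≤ ret M H τ)

/-- The top-% BC policy `π_ρ(a|s) = P_β(a | s, g ≥ g_ρ)`. -/
def topPolicy (M : MDP S A) (β : S → A → ℝ) (H : ℕ) (grho : ℝ) : S → A → ℝ :=
  fun s a => occSAge M β H s a grho / occSge M β H s grho

/-- `P_β(g ≥ grho)`. -/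
def retGeProb (M : MDP S A) (β : S → A → ℝ) (H : ℕ) (grho : ℝ) : ℝ :=
  ∑ τ : Traj S A H, trajProb M β H τ * ind (grho ≤ ret M H τ)

/-- The conditional state distribution `P_β(s | g ≥ grho)` (occupancy-averaged). -/
def condStateGe (M : MDP S A) (β : S → A → ℝ) (H : ℕ) (grho : ℝ) (s : S) : ℝ :=
  occSge M β H s grho / ((H : ℝ) * retGeProb M β H grho)

/-- `L_ρ(π̂) = E_{s ∼ P_β(·|g ≥ g_ρ)}[KL(π_ρ(·|s) ‖ π̂(·|s))]`. -/
def lossTop (M : MDP S A) (β : S → A → ℝ) (H : ℕ) (grho : ℝ) (pihat : S → A → ℝ) : ℝ :=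
  ∑ s, condStateGe M β H grho s * klDiv (topPolicy M β H grho s) (pihat s)

/-- State reached after `t` steps of the open-loop action sequence `as`
under the deterministic dynamics `T`, starting from `s1`. -/
def roll (T : S → A → S) (s1 : S) (as : ℕ → A) : ℕ → S
  | 0 => s1
  | t + 1 => T (roll T s1 as t) (as t)

/-- Extension of a finite action sequence to `ℕ` (junk beyond the horizon). -/
def extAct [Nonempty A] {H : ℕ} (as : Fin H → A) : ℕ → A :=
  fun t => if h : t < H then as ⟨t, h⟩ else Classical.arbitrary A

/-- `g(s_1, a_{1:H})`: return of the open-loop action sequence under the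
deterministic dynamics `(T, r0)`. -/
def openRet (T : S → A → S) (r0 : S → A → ℝ) (H : ℕ) (s1 : S) (as : ℕ → A) : ℝ :=
  ∑ t ∈ Finset.range H, r0 (roll T s1 as t) (as t)

/-- The (stochastic representation of a) deterministic policy `s ↦ pid s`. -/
def detPol (pid : S → A) : S → A → ℝ := fun s a => ind (a = pid s)

/-- Return of the deterministic policy `pid` rolled out for `H` steps from `s`
under the deterministic dynamics `(T, r0)`. -/
def detReturn (T : S → A → S) (r0 : S → A → ℝ) (pid : S → A) (H : ℕ) (s : S) : ℝ :=
  ∑ t ∈ Finset.range H, r0 ((fun x => T x (pid x))^[t] s) (pid ((fun x => T x (pid x))^[t] s))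

/-- The optimal value function `V*` with `n` steps to go. -/
def Vstar (M : MDP S A) [Nonempty A] : ℕ → S → ℝ
  | 0 => fun _ => 0
  | n + 1 => fun s =>
      Finset.univ.sup' Finset.univ_nonempty
        (fun a => ∑ s', M.P s a s' * (M.R s a s' + Vstar M n s'))

/-- Probability of a trajectory conditioned on starting at `s1`. -/
def trajProbFrom (M : MDP S A) (π : S → A → ℝ) (H : ℕ) (s1 : S) (τ : Traj S A H) : ℝ :=
  ind (τ.1 0 = s1) *
    ∏ t : Fin H, (π (τ.1 t.castSucc) (τ.2 t) * M.P (τ.1 t.castSucc) (τ.2 t) (τ.1 t.succ))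

/-- `P_β(g = g₀ | s_1 = s1)`. -/
def retProbFrom (M : MDP S A) (β : S → A → ℝ) (H : ℕ) (s1 : S) (g : ℝ) : ℝ :=
  ∑ τ : Traj S A H, trajProbFrom M β H s1 τ * ind (ret M H τ = g)

/-- `P_π(a_{1:H} | s_1)`: probability of an open-loop action sequence under `π` from `s1`. -/
def actSeqProb (M : MDP S A) (π : S → A → ℝ) (H : ℕ) (s1 : S) (as : Fin H → A) : ℝ :=
  ∑ ss : Fin (H + 1) → S, ind (ss 0 = s1) *
    ∏ t : Fin H, (π (ss t.castSucc) (as t) * M.P (ss t.castSucc) (as t) (ss t.succ))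

/-- Probability of an i.i.d. dataset of `N` trajectories sampled from `β`. -/
def dataProb (M : MDP S A) (β : S → A → ℝ) (H N : ℕ) (D : Fin N → Traj S A H) : ℝ :=
  ∏ i, trajProb M β H (D i)

/-- Empirical cross-entropy (negative log likelihood) loss of a return-conditioned policy. -/
def empLoss (M : MDP S A) (H N : ℕ) (π : S → ℝ → A → ℝ) (D : Fin N → Traj S A H) : ℝ :=
  (1 / ((N : ℝ) * (H : ℝ))) * ∑ i, ∑ t : Fin H,
    -Real.log (π ((D i).1 t.castSucc) (ret M H (D i)) ((D i).2 t))

/-- Population cross-entropy loss `L̄(π) = −E_{(s,a,g) ∼ P_β}[log π(a|s,g)]`. -/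
def popCE (M : MDP S A) (β : S → A → ℝ) (H : ℕ) (π : S → ℝ → A → ℝ) : ℝ :=
  (1 / (H : ℝ)) * ∑ t : Fin H, ∑ τ : Traj S A H, trajProb M β H τ *
    (-Real.log (π (τ.1 t.castSucc) (ret M H τ) (τ.2 t)))

/-- Entropy term `H_β = −E_{(s,a,g) ∼ P_β}[log P_β(a|s,g)]`. -/
def entB (M : MDP S A) (β : S → A → ℝ) (H : ℕ) : ℝ :=
  (1 / (H : ℝ)) * ∑ t : Fin H, ∑ τ : Traj S A H, trajProb M β H τ *
    (-Real.log (rcslCond M β H (τ.1 t.castSucc) (ret M H τ) (τ.2 t)))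

/-- Empirical cross-entropy loss of top-% BC: only trajectories with return `≥ grho` are kept. -/
def empLossTop (M : MDP S A) (H N : ℕ) (grho : ℝ) (π : S → A → ℝ)
    (D : Fin N → Traj S A H) : ℝ :=
  ∑ i, ind (grho ≤ ret M H (D i)) * ∑ t : Fin H,
    -Real.log (π ((D i).1 t.castSucc) ((D i).2 t))

/-- Joint occupancy of (state, action, return) for a general data distribution `W`
over trajectories. -/
def occSAW (H : ℕ) (W : Traj S A H → ℝ) (M : MDP S A) (s : S) (a : A) (g : ℝ) : ℝ :=
  ∑ t : Fin H, ∑ τ : Traj S A H, W τ * ind (τ.1 t.castSucc = s ∧ τ.2 t = a ∧ ret M H τ = g)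

/-- Occupancy of (state, return) for a general data distribution `W` over trajectories. -/
def occSW (H : ℕ) (W : Traj S A H → ℝ) (M : MDP S A) (s : S) (g : ℝ) : ℝ :=
  ∑ t : Fin H, ∑ τ : Traj S A H, W τ * ind (τ.1 t.castSucc = s ∧ ret M H τ = g)

/-- The RCSL policy obtained from a general data distribution `W` over trajectories. -/
def rcslPolicyW (H : ℕ) (W : Traj S A H → ℝ) (M : MDP S A) (f : S → ℝ) : S → A → ℝ :=
  fun s a => occSAW H W M s a (f s) / occSW H W M s (f s)

/-! The step-`t` state distributions obey the forward recursion
`d^{t+1}(s') = ∑_{s,a} d^t(s) π(a|s) P(s'|s,a)`. The transition kernel does not increase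
`L¹` distances, so one step of the recursion under `π` and under `π'` adds at most
`2 E_{s∼d_π^t}[TV(π(·|s), π'(·|s))]` to `‖d_π^t − d_{π'}^t‖₁`; hence
`‖d_π^t − d_{π'}^t‖₁ ≤ 2 ∑_{u<t} E_{d_π^u}[TV]`. Averaging over `t < H` and bounding every
partial sum by the full one (`u < H`) costs the factor `H`. -/

def nextDist (M : MDP S A) (π : S → A → ℝ) (d : S → ℝ) : S → ℝ :=
  fun s' => ∑ s, ∑ a, d s * (π s a * M.P s a s')

def forwardDist (M : MDP S A) (π : S → A → ℝ) : ℕ → S → ℝ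
  | 0 => M.init
  | t + 1 => nextDist M π (forwardDist M π t)

lemma sum_nextDist_mul (M : MDP S A) (π : S → A → ℝ) (d g : S → ℝ) :
    ∑ s', nextDist M π d s' * g s' = ∑ s, d s * ∑ a, π s a * ∑ s', M.P s a s' * g s' := by
  simp only [nextDist, Finset.sum_mul, Finset.mul_sum]
  rw [Finset.sum_comm]
  refine Finset.sum_congr rfl fun s _ => ?_
  rw [Finset.sum_comm]
  exact Finset.sum_congr rfl fun a _ => Finset.sum_congr rfl fun s' _ => by ring

lemma trajProb_snoc (M : MDP S A) (π : S → A → ℝ) {H : ℕ} (τ : Traj S A H) (s' : S) (a : A) :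
    trajProb M π (H + 1) (Fin.snoc τ.1 s', Fin.snoc τ.2 a) =
      trajProb M π H τ * (π (τ.1 (Fin.last H)) a * M.P (τ.1 (Fin.last H)) a s') := by
  simp only [trajProb, Fin.prod_univ_castSucc, Fin.succ_castSucc, Fin.snoc_castSucc, Fin.snoc_last,
    Fin.succ_last, Fin.snoc_apply_zero]
  ring

def trajSnocEquiv (S A : Type) (H : ℕ) : Traj S A H × A × S ≃ Traj S A (H + 1) where
  toFun x := (Fin.snoc x.1.1 x.2.2, Fin.snoc x.1.2 x.2.1)
  invFun τ := ((Fin.init τ.1, Fin.init τ.2), τ.2 (Fin.last H), τ.1 (Fin.last (H + 1)))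
  left_inv x := by simp
  right_inv τ := by simp

lemma sum_traj_succ {H : ℕ} (F : Traj S A (H + 1) → ℝ) :
    ∑ τ, F τ = ∑ τ : Traj S A H, ∑ a, ∑ s', F (Fin.snoc τ.1 s', Fin.snoc τ.2 a) := by
  rw [← (trajSnocEquiv S A H).sum_comp, Fintype.sum_prod_type]
  simp only [Fintype.sum_prod_type]
  rfl

lemma sum_trajProb_succ_mul (M : MDP S A) (π : S → A → ℝ) {H : ℕ} (F : Traj S A (H + 1) → ℝ) :
    ∑ τ, trajProb M π (H + 1) τ * F τ =
      ∑ τ : Traj S A H, trajProb M π H τ * ∑ a, π (τ.1 (Fin.last H)) a *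
        ∑ s', M.P (τ.1 (Fin.last H)) a s' * F (Fin.snoc τ.1 s', Fin.snoc τ.2 a) := by
  simp only [sum_traj_succ, trajProb_snoc, Finset.mul_sum, mul_assoc]

lemma sum_trajProb_mul_state (M : MDP S A) (π : S → A → ℝ) (hπ : ∀ s, ∑ a, π s a = 1)
    (H : ℕ) (t : Fin (H + 1)) (g : S → ℝ) :
    ∑ τ : Traj S A H, trajProb M π H τ * g (τ.1 t) = ∑ s, forwardDist M π t s * g s := by
  induction H generalizing g with
  | zero =>
    obtain rfl := Fin.fin_one_eq_zero t
    simp only [trajProb, Finset.univ_eq_empty, Finset.prod_empty, mul_one, Fintype.sum_prod_type,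
      Fintype.sum_unique]
    exact ((Equiv.funUnique (Fin 1) S).symm.sum_comp _).symm
  | succ H ih =>
    rw [sum_trajProb_succ_mul]
    induction t using Fin.lastCases with
    | last =>
      have := ih (Fin.last H) fun s => ∑ a, π s a * ∑ s', M.P s a s' * g s'
      simpa only [Fin.snoc_last, Fin.val_last, forwardDist, sum_nextDist_mul] using this
    | cast i =>
      simpa only [Fin.snoc_castSucc, Fin.val_castSucc, ← Finset.sum_mul, M.P_sum_one, one_mul,
        hπ] using ih i g

lemma stepDist_eq_forwardDist (M : MDP S A) (π : S → A → ℝ) (hπ : ∀ s, ∑ a, π s a = 1)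
    (H : ℕ) (t : Fin (H + 1)) (s : S) : stepDist M π H t s = forwardDist M π t s := by
  simpa [stepDist, ind] using sum_trajProb_mul_state M π hπ H t fun x => ind (x = s)

lemma avgOcc_eq_sum_forwardDist (M : MDP S A) (π : S → A → ℝ) (hπ : ∀ s, ∑ a, π s a = 1)
    (H : ℕ) (s : S) : avgOcc M π H s = (∑ t ∈ range H, forwardDist M π t s) / H := by
  simp only [avgOcc, stepDist_eq_forwardDist M π hπ, Fin.val_castSucc,
    Fin.sum_univ_eq_sum_range (fun t => forwardDist M π t s)]
  ring

lemma forwardDist_nonneg (M : MDP S A) {π : S → A → ℝ} (hπ : ∀ s a, 0 ≤ π s a) (t : ℕ) (s : S) :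
    0 ≤ forwardDist M π t s := by
  induction t generalizing s with
  | zero => exact M.init_nonneg s
  | succ t ih =>
    exact Finset.sum_nonneg fun s _ => Finset.sum_nonneg fun a _ =>
      mul_nonneg (ih s) (mul_nonneg (hπ s a) (M.P_nonneg s a _))

lemma tv_nonneg (p q : A → ℝ) : 0 ≤ tv p q :=
  mul_nonneg (by norm_num) (Finset.sum_nonneg fun a _ => abs_nonneg _)

lemma MDP.sum_abs_transition_le (M : MDP S A) (w : S → A → ℝ) :
    ∑ s', |∑ s, ∑ a, w s a * M.P s a s'| ≤ ∑ s, ∑ a, |w s a| := by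
  calc ∑ s', |∑ s, ∑ a, w s a * M.P s a s'|
      ≤ ∑ s', ∑ s, ∑ a, |w s a| * M.P s a s' := by
        gcongr with s'
        refine (Finset.abs_sum_le_sum_abs _ _).trans (Finset.sum_le_sum fun s _ => ?_)
        refine (Finset.abs_sum_le_sum_abs _ _).trans (Finset.sum_le_sum fun a _ => ?_)
        rw [abs_mul, abs_of_nonneg (M.P_nonneg s a s')]
    _ = ∑ s, ∑ a, |w s a| := by
        rw [Finset.sum_comm]
        refine Finset.sum_congr rfl fun s _ => ?_
        rw [Finset.sum_comm]
        simp only [← Finset.mul_sum, M.P_sum_one, mul_one]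

lemma sum_abs_mul_sub_mul_le {p q : A → ℝ} (hq : (∀ a, 0 ≤ q a) ∧ ∑ a, q a = 1) {x y : ℝ}
    (hx : 0 ≤ x) : ∑ a, |x * p a - y * q a| ≤ |x - y| + 2 * x * tv p q := by
  calc ∑ a, |x * p a - y * q a| ≤ ∑ a, (|x - y| * q a + x * |p a - q a|) := by
        gcongr with a
        calc |x * p a - y * q a| = |(x - y) * q a + x * (p a - q a)| := by ring_nf
          _ ≤ |(x - y) * q a| + |x * (p a - q a)| := abs_add_le _ _
          _ = |x - y| * q a + x * |p a - q a| := by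
            rw [abs_mul, abs_mul, abs_of_nonneg (hq.1 a), abs_of_nonneg hx]
    _ = |x - y| + 2 * x * tv p q := by
        rw [Finset.sum_add_distrib, ← Finset.mul_sum, ← Finset.mul_sum, hq.2, tv]
        ring

lemma sum_abs_nextDist_sub_le (M : MDP S A) (π : S → A → ℝ) {π' : S → A → ℝ}
    (hπ' : IsPolicy π') {d d' : S → ℝ} (hd : ∀ s, 0 ≤ d s) :
    ∑ s', |nextDist M π d s' - nextDist M π' d' s'| ≤
      ∑ s, |d s - d' s| + 2 * ∑ s, d s * tv (π s) (π' s) := by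
  have hdiff : ∀ s', nextDist M π d s' - nextDist M π' d' s' =
      ∑ s, ∑ a, (d s * π s a - d' s * π' s a) * M.P s a s' := fun s' => by
    simp only [nextDist, ← Finset.sum_sub_distrib]
    exact Finset.sum_congr rfl fun s _ => Finset.sum_congr rfl fun a _ => by ring
  calc ∑ s', |nextDist M π d s' - nextDist M π' d' s'|
      ≤ ∑ s, ∑ a, |d s * π s a - d' s * π' s a| := by
        simpa only [hdiff] using M.sum_abs_transition_le _
    _ ≤ ∑ s, (|d s - d' s| + 2 * d s * tv (π s) (π' s)) :=
        Finset.sum_le_sum fun s _ => sum_abs_mul_sub_mul_le ⟨hπ'.1 s, hπ'.2 s⟩ (hd s)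
    _ = _ := by rw [Finset.sum_add_distrib, Finset.mul_sum]; simp only [mul_assoc]

lemma sum_abs_forwardDist_sub_le (M : MDP S A) {π π' : S → A → ℝ} (hπ : IsPolicy π)
    (hπ' : IsPolicy π') (t : ℕ) :
    ∑ s, |forwardDist M π t s - forwardDist M π' t s| ≤
      ∑ u ∈ range t, 2 * ∑ s, forwardDist M π u s * tv (π s) (π' s) := by
  induction t with
  | zero => simp [forwardDist]
  | succ t ih =>
    rw [Finset.sum_range_succ]
    have := sum_abs_nextDist_sub_le M π hπ' (forwardDist_nonneg M hπ.1 t) (d' := forwardDist M π' t)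
    exact this.trans (by linarith)

lemma sum_abs_avg_le_of_cumulative {ι : Type*} [Fintype ι] {x : ℕ → ι → ℝ} {e : ℕ → ℝ}
    (he : ∀ u, 0 ≤ e u) (hx : ∀ t, ∑ i, |x t i| ≤ ∑ u ∈ range t, e u) (H : ℕ) :
    ∑ i, |(∑ t ∈ range H, x t i) / H| ≤ ∑ u ∈ range H, e u := by
  rcases Nat.eq_zero_or_pos H with rfl | hH
  · simp
  calc ∑ i, |(∑ t ∈ range H, x t i) / H| ≤ (∑ t ∈ range H, ∑ i, |x t i|) / H := by
        simp only [abs_div, Nat.abs_cast, ← Finset.sum_div]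
        rw [Finset.sum_comm]
        gcongr with i
        exact Finset.abs_sum_le_sum_abs _ _
    _ ≤ (∑ _t ∈ range H, ∑ u ∈ range H, e u) / H := by
        gcongr with t ht
        exact (hx t).trans (Finset.sum_le_sum_of_subset_of_nonneg
          (Finset.range_subset_range.mpr (Finset.mem_range.mp ht).le) fun u _ _ => he u)
    _ = ∑ u ∈ range H, e u := by
        rw [Finset.sum_const, Finset.card_range, nsmul_eq_mul]
        field_simp

lemma natCast_mul_sum_avgOcc_mul (M : MDP S A) (π : S → A → ℝ) (hπ : ∀ s, ∑ a, π s a = 1)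
    (H : ℕ) (f : S → ℝ) :
    (H : ℝ) * ∑ s, avgOcc M π H s * f s = ∑ t ∈ range H, ∑ s, forwardDist M π t s * f s := by
  rcases Nat.eq_zero_or_pos H with rfl | hH
  · simp
  have hH' : (H : ℝ) ≠ 0 := by positivity
  simp only [avgOcc_eq_sum_forwardDist M π hπ, div_mul_eq_mul_div, ← Finset.sum_div,
    Finset.sum_mul, mul_div_cancel₀ _ hH']
  exact Finset.sum_comm

/-- Lemma 1.
For any two policies `π, π'`, the average state occupancy distributions satisfy
`‖d_π − d_{π'}‖₁ ≤ 2 H · E_{s ∼ d_π}[TV(π(·|s), π'(·|s))]`. -/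
theorem occupancy_l1_bound
    {S A : Type} [Fintype S] [Fintype A]
    (M : MDP S A) (H : ℕ)
    (π π' : S → A → ℝ) (hπ : IsPolicy π) (hπ' : IsPolicy π') :
    ∑ s, |avgOcc M π H s - avgOcc M π' H s| ≤
      2 * (H : ℝ) * ∑ s, avgOcc M π H s * tv (π s) (π' s) := by
  calc ∑ s, |avgOcc M π H s - avgOcc M π' H s|
      = ∑ s, |(∑ t ∈ range H, (forwardDist M π t s - forwardDist M π' t s)) / H| := by
        simp only [avgOcc_eq_sum_forwardDist M _ hπ.2, avgOcc_eq_sum_forwardDist M _ hπ'.2,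
          Finset.sum_sub_distrib, sub_div]
    _ ≤ ∑ u ∈ range H, 2 * ∑ s, forwardDist M π u s * tv (π s) (π' s) :=
        sum_abs_avg_le_of_cumulative
          (fun u => mul_nonneg zero_le_two (Finset.sum_nonneg fun s _ =>
            mul_nonneg (forwardDist_nonneg M hπ.1 u s) (tv_nonneg _ _)))
          (sum_abs_forwardDist_sub_le M hπ hπ') H
    _ = 2 * (H : ℝ) * ∑ s, avgOcc M π H s * tv (π s) (π' s) := by
        rw [mul_assoc, natCast_mul_sum_avgOcc_mul M π hπ.2, Finset.mul_sum]
end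
end

section
/- Consider the horizon-1 MDP with a single initial state s_1 and two actions, where action a_1 yields return g = 1 with probability 1 − ε and g = 0 with probability ε, action a_2 yields g = 1 with probability ε and g = 0 with probability 1 − ε, and the behavior policy selects a_1 with probability ε and a_2 with probability 1 − ε. Then with conditioning f(s_1) = 1, the RCSL policy satisfies π_f^RCSL(a_1|s_1) = ε(1−ε)/(ε(1−ε) + (1−ε)ε) = 1/2, so E[f(s_1)] − J(π_f^RCSL) = 1/2 and J(π*) − J(π_f^RCSL) = 1/2 − ε. -/
open scoped Classical
open Finset

/-! Conditioning on return `1` weights each action `a` by `β(a|s₁) · P(g = 1 | s₁, a)`. Here both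
products equal `ε(1 − ε)`: the behavior policy's preference for `a₂` exactly cancels `a₁`'s higher
success probability. So the RCSL policy is uniform and earns `1/2`, while the optimal policy plays
`a₁` and earns `1 − ε`. -/

lemma sum_traj_one {S A : Type} {M : Type*} [Fintype S] [Fintype A] [AddCommMonoid M]
    (F : Traj S A 1 → M) : ∑ τ, F τ = ∑ s, ∑ s', ∑ a, F (![s, s'], fun _ => a) := by
  rw [Fintype.sum_prod_type, ← (piFinTwoEquiv fun _ => S).symm.sum_comp, Fintype.sum_prod_type]
  refine Fintype.sum_congr _ _ fun s => Fintype.sum_congr _ _ fun s' => ?_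
  rw [← (Equiv.funUnique (Fin 1) A).symm.sum_comp]
  rfl

section

variable {S A : Type} [Fintype S] [Fintype A]

lemma J_one (M : MDP S A) (π : S → A → ℝ) :
    J M π 1 = ∑ s, M.init s * ∑ a, π s a * ∑ s', M.P s a s' * M.R s a s' := by
  simp only [J, trajProb, ret, sum_traj_one, Fin.prod_univ_one, Fin.sum_univ_one, mul_sum]
  refine Fintype.sum_congr _ _ fun s => ?_
  rw [Finset.sum_comm]
  simp [mul_assoc]

lemma occSA_one (M : MDP S A) (β : S → A → ℝ) (s : S) (a : A) (g : ℝ) :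
    occSA M β 1 s a g = M.init s * β s a * ∑ s', M.P s a s' * ind (M.R s a s' = g) := by
  simp only [occSA, trajProb, ret, sum_traj_one, Fin.prod_univ_one, Fin.sum_univ_one, mul_sum]
  simp [ind, ite_and, mul_assoc]

lemma occS_eq_sum_occSA (M : MDP S A) (β : S → A → ℝ) (H : ℕ) (s : S) (g : ℝ) :
    occS M β H s g = ∑ a, occSA M β H s a g := by
  simp only [occS, occSA]
  conv_rhs => rw [Finset.sum_comm]; enter [2, t]; rw [Finset.sum_comm]
  simp [ind, ite_and]

end

lemma isPolicy_detPol {S A : Type} [Fintype A] (pid : S → A) : IsPolicy (detPol pid) :=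
  ⟨fun _ _ => by unfold detPol ind; positivity, fun s => by simp [detPol, ind]⟩

/-- the bias example of Figure 1c.
Horizon-1 MDP with a single initial state `0`, a "win" state `1` (reward 1) and a
"lose" state `2` (reward 0).  Action `a₁ = 0` yields return `1` w.p. `1 − ε`, action
`a₂ = 1` yields return `1` w.p. `ε`; the behavior selects `a₁` w.p. `ε` and `a₂`
w.p. `1 − ε`.  With conditioning `f(s₁) = 1`:
`π_f^RCSL(a₁|s₁) = ε(1−ε)/(ε(1−ε) + (1−ε)ε) = 1/2`, hence
`E[f(s₁)] − J(π_f^RCSL) = 1/2` and `J(π*) − J(π_f^RCSL) = 1/2 − ε`. -/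
theorem figure_1c_example
    (ε : ℝ) (hε0 : 0 < ε) (hε1 : ε < 1 / 2)
    (M : MDP (Fin 3) (Fin 2))
    (hinit : M.init = fun s => ind (s = 0))
    -- action `a₁ = 0`: win w.p. `1 − ε`; action `a₂ = 1`: win w.p. `ε`
    (hP0 : ∀ s', M.P 0 0 s' = if s' = 1 then 1 - ε else if s' = 2 then ε else 0)
    (hP1 : ∀ s', M.P 0 1 s' = if s' = 1 then ε else if s' = 2 then 1 - ε else 0)
    (hR : ∀ a s', M.R 0 a s' = ind (s' = 1))
    -- behavior policy: `β(a₁|s₁) = ε`, `β(a₂|s₁) = 1 − ε`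
    (β : Fin 3 → Fin 2 → ℝ) (hβ : β = fun _ a => if a = 0 then ε else 1 - ε)
    -- conditioning value `f(s₁) = 1`
    (f : Fin 3 → ℝ) (hf : f = fun _ => 1) :
    rcslPolicy M β 1 f 0 0 = 1 / 2 ∧
    (∑ s, M.init s * f s) - J M (rcslPolicy M β 1 f) 1 = 1 / 2 ∧
    ∀ πstar : Fin 3 → Fin 2 → ℝ, IsPolicy πstar →
      (∀ π, IsPolicy π → J M π 1 ≤ J M πstar 1) →
      J M πstar 1 - J M (rcslPolicy M β 1 f) 1 = 1 / 2 - ε := by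
  have hJ (π : Fin 3 → Fin 2 → ℝ) : J M π 1 = π 0 0 * (1 - ε) + π 0 1 * ε := by
    simp [J_one, hinit, hP0, hP1, hR, ind, Fin.sum_univ_three]
  have hocc (a : Fin 2) : occSA M β 1 0 a 1 = ε * (1 - ε) := by
    fin_cases a <;> simp [occSA_one, hinit, hβ, hP0, hP1, hR, ind, Fin.sum_univ_three, mul_comm]
  have hrcsl (a : Fin 2) : rcslPolicy M β 1 f 0 a = 1 / 2 := by
    have hmass : ε * (1 - ε) ≠ 0 := by nlinarith
    simp only [rcslPolicy, rcslCond, hf, occS_eq_sum_occSA, hocc, Fin.sum_univ_two]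
    rw [← two_mul, div_mul_cancel_right₀ hmass, one_div]
  have hJ_rcsl : J M (rcslPolicy M β 1 f) 1 = 1 / 2 := by
    rw [hJ, hrcsl, hrcsl]; ring
  have hJ_le (π : Fin 3 → Fin 2 → ℝ) (hπ : IsPolicy π) : J M π 1 ≤ 1 - ε := by
    have hsum : π 0 0 + π 0 1 = 1 := by simpa [Fin.sum_univ_two] using hπ.2 0
    rw [hJ]
    nlinarith [hπ.1 0 1]
  have hJ_det : J M (detPol fun _ => 0) 1 = 1 - ε := by
    simp [hJ, detPol, ind]
  refine ⟨hrcsl 0, ?_, fun πstar hπstar hopt => ?_⟩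
  · have hf_mean : ∑ s, M.init s * f s = 1 := by simp [hinit, hf, ind, Fin.sum_univ_three]
    rw [hf_mean, hJ_rcsl]
    norm_num
  · have hJ_opt : J M πstar 1 = 1 - ε :=
      le_antisymm (hJ_le πstar hπstar) (hJ_det ▸ hopt _ (isPolicy_detPol _))
    rw [hJ_opt, hJ_rcsl]
    ring
end

section
/- In the stitching example MDP of Figure 6 (horizon H = 2, states s_0, s_1, s_2, deterministic transitions and rewards), with a data distribution that is a mixture of (i) trajectories starting at s_0 choosing the first action uniformly and then deterministically choosing the bad action a_0 from s_2 (receiving return 0), and (ii) trajectories starting at s_1 that deterministically take the good action and receive return 1: the return-conditioned distribution satisfies P_data(a | s_1, g = 1) being undefined for trajectories originating at s_0 (since no trajectory from s_0 achieves g = 1), and P_data(a_1 | s_1, g = 0) = 0.5; hence for any conditioning function f with f(s_0) = 0, the RCSL policy chooses the optimal first action from s_0 with probability at most 1/2. -/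
open scoped Classical
open Finset

noncomputable section

variable {S A : Type} [Fintype S] [Fintype A]

private lemma sum_pi_succ' {α : Type*} [Fintype α] {n : ℕ}
    (g : (Fin (n + 1) → α) → ℝ) :
    ∑ f, g f = ∑ x : α, ∑ f : Fin n → α, g (Fin.cons x f) := by
  rw [← (Fin.consEquiv (fun _ : Fin (n+1) => α)).sum_comp]
  simp [Fintype.sum_prod_type, Fin.consEquiv]

private lemma sum_pi3 {α : Type*} [Fintype α] (g : (Fin (2 + 1) → α) → ℝ) :
    ∑ f, g f = ∑ x : α, ∑ y : α, ∑ z : α, g ![x, y, z] := by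
  rw [sum_pi_succ']
  refine Finset.sum_congr rfl fun x _ => ?_
  rw [sum_pi_succ']
  refine Finset.sum_congr rfl fun y _ => ?_
  rw [sum_pi_succ']
  refine Finset.sum_congr rfl fun z _ => ?_
  rw [Fintype.sum_unique]
  exact congrArg g (congrArg _ (congrArg _ (congrArg _ (Subsingleton.elim _ _))))

private lemma sum_pi2 {α : Type*} [Fintype α] (g : (Fin 2 → α) → ℝ) :
    ∑ f, g f = ∑ x : α, ∑ y : α, g ![x, y] := by
  rw [sum_pi_succ']
  refine Finset.sum_congr rfl fun x _ => ?_
  rw [sum_pi_succ']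
  refine Finset.sum_congr rfl fun y _ => ?_
  rw [Fintype.sum_unique]
  exact congrArg g (congrArg _ (congrArg _ (Subsingleton.elim _ _)))

set_option maxHeartbeats 4000000 in
/-- the trajectory-stitching example of Figure 6.
Horizon-2 MDP with states `s₀ = 0, s₁ = 1, s₂ = 2` (plus a terminal state `3`) and
deterministic dynamics: from `s₀` the good action `a₁ = 1` leads to `s₂` and `a₀ = 0`
leads to `s₁`; from `s₁` and `s₂` action `a₁` yields reward `1` and `a₀` yields `0`.
The data distribution `W` is a 50/50 mixture of (i) trajectories from `s₀` with a
uniform first action followed by the bad action `a₀` (return 0), and (ii) trajectories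
from `s₁` that take the good action `a₁` (return 1).  Then: no trajectory from `s₀`
achieves return `1`; the return-conditioned action distribution at the initial state
given `g = 0` is uniform, `P_data(a₁ | ·, g = 0) = 1/2`; hence for any conditioning
function `f` with `f(s₀) = 0`, the RCSL policy selects the optimal first action `a₁`
from `s₀` with probability at most `1/2`. -/
theorem stitching_example
    (M1 M2 : MDP (Fin 4) (Fin 2))
    (hPeq : M1.P = M2.P) (hReq : M1.R = M2.R)
    -- deterministic transitions: from `s₀`, `a₁ ↦ s₂` and `a₀ ↦ s₁`; all else terminal
    (hP : ∀ s a s', M1.P s a s' =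
      ind (s' = if s = 0 then (if a = 1 then 2 else 1) else 3))
    -- rewards: `a₁` from `s₁` or `s₂` yields `1`, everything else `0`
    (hR : ∀ s a s', M1.R s a s' = ind ((s = 1 ∨ s = 2) ∧ a = 1))
    -- process (i) starts at `s₀`, process (ii) starts at `s₁`
    (hinit1 : M1.init = fun s => ind (s = 0))
    (hinit2 : M2.init = fun s => ind (s = 1))
    (β1 β2 : Fin 4 → Fin 2 → ℝ)
    -- process (i): uniform first action at `s₀`, bad action `a₀` everywhere else
    (hβ1 : β1 = fun s a => if s = 0 then 1 / 2 else ind (a = 0))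
    -- process (ii): the good action `a₁` everywhere
    (hβ2 : β2 = fun _ a => ind (a = 1))
    (W : Traj (Fin 4) (Fin 2) 2 → ℝ)
    (hW : W = fun τ => (1 / 2) * trajProb M1 β1 2 τ + (1 / 2) * trajProb M2 β2 2 τ) :
    -- no trajectory in the data originating at `s₀` achieves return `1`
    (∑ τ : Traj (Fin 4) (Fin 2) 2, W τ * ind (τ.1 0 = 0 ∧ ret M1 2 τ = 1)) = 0 ∧
    -- `P_data(a₁ | s₀, g = 0) = 1/2`
    occSAW 2 W M1 0 1 0 / occSW 2 W M1 0 0 = 1 / 2 ∧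
    -- for any `f` with `f(s₀) = 0`, RCSL takes the optimal first action w.p. ≤ 1/2
    (∀ f : Fin 4 → ℝ, f 0 = 0 → rcslPolicyW 2 W M1 f 0 1 ≤ 1 / 2) := by
  subst hβ1 hβ2 hW
  have h1 : (∑ τ : Traj (Fin 4) (Fin 2) 2,
      ((1 / 2) * trajProb M1 (fun s a => if s = 0 then 1 / 2 else ind (a = 0)) 2 τ
        + (1 / 2) * trajProb M2 (fun _ a => ind (a = 1)) 2 τ)
      * ind (τ.1 0 = 0 ∧ ret M1 2 τ = 1)) = 0 := by
    simp only [Fintype.sum_prod_type, sum_pi3, sum_pi2, trajProb, ret, ind,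
      hP, hR, ← hPeq, hinit1, hinit2, Fin.sum_univ_two, Fin.prod_univ_two,
      Fin.castSucc_zero, Fin.castSucc_one, Fin.succ_zero_eq_one, Fin.succ_one_eq_two,
      Matrix.cons_val_zero, Matrix.cons_val_one, Matrix.cons_val_two,
      Matrix.head_cons, Matrix.vecTail, Function.comp]
    simp (config := { decide := true }) only [Fin.sum_univ_four, Fin.sum_univ_two,
      Matrix.vecHead, Matrix.vecTail, Function.comp, Matrix.cons_val_zero,
      Matrix.cons_val_one, Matrix.head_cons]
    norm_num
  have h2 : occSAW 2 (fun τ =>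
      (1 / 2) * trajProb M1 (fun s a => if s = 0 then 1 / 2 else ind (a = 0)) 2 τ
        + (1 / 2) * trajProb M2 (fun _ a => ind (a = 1)) 2 τ) M1 0 1 0
      / occSW 2 (fun τ =>
      (1 / 2) * trajProb M1 (fun s a => if s = 0 then 1 / 2 else ind (a = 0)) 2 τ
        + (1 / 2) * trajProb M2 (fun _ a => ind (a = 1)) 2 τ) M1 0 0 = 1 / 2 := by
    have hA : occSAW 2 (fun τ =>
        (1 / 2) * trajProb M1 (fun s a => if s = 0 then 1 / 2 else ind (a = 0)) 2 τ
          + (1 / 2) * trajProb M2 (fun _ a => ind (a = 1)) 2 τ) M1 0 1 0 = 1 / 4 := by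
      simp only [occSAW, Fintype.sum_prod_type, sum_pi3, sum_pi2, trajProb, ret, ind,
        hP, hR, ← hPeq, hinit1, hinit2, Fin.sum_univ_two, Fin.prod_univ_two,
        Fin.castSucc_zero, Fin.castSucc_one, Fin.succ_zero_eq_one, Fin.succ_one_eq_two,
        Matrix.cons_val_zero, Matrix.cons_val_one, Matrix.cons_val_two,
        Matrix.head_cons, Matrix.vecTail, Function.comp]
      simp (config := { decide := true }) only [Fin.sum_univ_four, Fin.sum_univ_two,
        Matrix.vecHead, Matrix.vecTail, Function.comp, Matrix.cons_val_zero,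
        Matrix.cons_val_one, Matrix.head_cons]
      norm_num
    have hB : occSW 2 (fun τ =>
        (1 / 2) * trajProb M1 (fun s a => if s = 0 then 1 / 2 else ind (a = 0)) 2 τ
          + (1 / 2) * trajProb M2 (fun _ a => ind (a = 1)) 2 τ) M1 0 0 = 1 / 2 := by
      simp only [occSW, Fintype.sum_prod_type, sum_pi3, sum_pi2, trajProb, ret, ind,
        hP, hR, ← hPeq, hinit1, hinit2, Fin.sum_univ_two, Fin.prod_univ_two,
        Fin.castSucc_zero, Fin.castSucc_one, Fin.succ_zero_eq_one, Fin.succ_one_eq_two,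
        Matrix.cons_val_zero, Matrix.cons_val_one, Matrix.cons_val_two,
        Matrix.head_cons, Matrix.vecTail, Function.comp]
      simp (config := { decide := true }) only [Fin.sum_univ_four, Fin.sum_univ_two,
        Matrix.vecHead, Matrix.vecTail, Function.comp, Matrix.cons_val_zero,
        Matrix.cons_val_one, Matrix.head_cons]
      norm_num
    rw [hA, hB]; norm_num
  refine ⟨h1, h2, ?_⟩
  intro f hf
  have : rcslPolicyW 2 (fun τ =>
      (1 / 2) * trajProb M1 (fun s a => if s = 0 then 1 / 2 else ind (a = 0)) 2 τ
        + (1 / 2) * trajProb M2 (fun _ a => ind (a = 1)) 2 τ) M1 f 0 1 = 1 / 2 := by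
    rw [rcslPolicyW, hf]; exact h2
  rw [this]
end
end
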